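/- Let ε ∈ (0,1), a > 0, b > 0 with Q(a,b) = 1 − ε, and let y : ℝ → ℝ be a function differentiable at a with y(a) = b, y > 0 on a neighborhood of a, and Q(x, y(x)) = 1 − ε for all x in a neighborhood of a (i.e. y parametrizes the level curve of the Marcum Q-function through (a,b)). Then y'(a) = I_1(a·b)/I_0(a·b). -/

import Mathlib

open Real MeasureTheory Filter

noncomputable def besselI0 (z : ℝ) : ℝ :=
  ∑' k : ℕ, (z / 2) ^ (2 * k) / ((Nat.factorial k : ℝ)) ^ 2

noncomputable def besselI1 (z : ℝ) : ℝ :=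
  ∑' k : ℕ, (z / 2) ^ (2 * k + 1) / ((Nat.factorial k : ℝ) * (Nat.factorial (k + 1) : ℝ))

noncomputable def marcumQ (a b : ℝ) : ℝ :=
  ∫ t in Set.Ioi b, t * Real.exp (-(t ^ 2 + a ^ 2) / 2) * besselI0 (a * t)

noncomputable def gaussQ (c : ℝ) : ℝ :=
  ∫ t in Set.Ioi c, (1 / Real.sqrt (2 * Real.pi)) * Real.exp (-t ^ 2 / 2)

/-!
Implicit differentiation. Both partial derivatives of `Q` exist everywhere and are continuous:
`∂Q/∂b (a, b) = -b e^{-(a²+b²)/2} I₀(ab)` by the fundamental theorem of calculus, and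
`∂Q/∂a (a, b) = b e^{-(a²+b²)/2} I₁(ab)` by differentiating under the integral sign (the bounds
`|I₀ z|, |I₁ z| ≤ e^{|z|}` give the domination) and integrating the result exactly, since
`(z I₁(z))' = z I₀(z)` makes the `a`-derivative of the integrand a `t`-derivative. Hence `Q` is
differentiable at `(a, b)`, and differentiating `Q(x, y x) = 1 - ε` at `a` gives
`∂Q/∂a + ∂Q/∂b · y' = 0`, which is solvable for `y'` because `b > 0` and `I₀ > 0`.
-/

open Topology
open scoped Nat

theorem hasDerivAt_comp_of_hasDerivAt_partial
    {F F₁ F₂ : ℝ → ℝ → ℝ} {y : ℝ → ℝ} {a y' : ℝ}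
    (h₁ : ∀ᶠ v in 𝓝 (a, y a), HasDerivAt (F · v.2) (F₁ v.1 v.2) v.1)
    (h₂ : ∀ᶠ v in 𝓝 (a, y a), HasDerivAt (F v.1 ·) (F₂ v.1 v.2) v.2)
    (c₁ : ContinuousAt (Function.uncurry F₁) (a, y a))
    (c₂ : ContinuousAt (Function.uncurry F₂) (a, y a))
    (hy : HasDerivAt y y' a) :
    HasDerivAt (fun x => F x (y x)) (F₁ a (y a) + F₂ a (y a) * y') a := by
  have hsmul : Continuous fun r : ℝ => (1 : ℝ →L[ℝ] ℝ).smulRight r := by fun_prop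
  have hF := hasStrictFDerivAt_uncurry_coprod (𝕜 := ℝ)
    (f₁ := fun x v => (1 : ℝ →L[ℝ] ℝ).smulRight (F₁ x v))
    (f₂ := fun x v => (1 : ℝ →L[ℝ] ℝ).smulRight (F₂ x v))
    (h₁.mono fun v hv => hv.hasFDerivAt) (h₂.mono fun v hv => hv.hasFDerivAt)
    (hsmul.continuousAt.comp c₁) (hsmul.continuousAt.comp c₂)
  refine (hF.hasFDerivAt.comp_hasDerivAt a ((hasDerivAt_id a).prodMk hy)).congr_deriv ?_
  simp [Function.HasUncurry.uncurry, mul_comm]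

theorem hasDerivAt_integral_Ioi {E : Type*} [NormedAddCommGroup E] [NormedSpace ℝ E]
    [CompleteSpace E] {f : ℝ → E} {b : ℝ} (hf : Integrable f) (hfb : ContinuousAt f b) :
    HasDerivAt (fun s => ∫ t in Set.Ioi s, f t) (-f b) b := by
  have hFTC := intervalIntegral.integral_hasDerivAt_right
    (hf.intervalIntegrable (a := b) (b := b)) hf.aestronglyMeasurable.stronglyMeasurableAtFilter hfb
  refine (hFTC.const_sub (∫ t in Set.Ioi b, f t)).congr_of_eventuallyEq
    (Eventually.of_forall fun s => ?_)
  dsimp only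
  rw [← intervalIntegral.integral_Ioi_sub_Ioi' hf.integrableOn hf.integrableOn, sub_sub_cancel]

section PowerSeries

variable {c : ℕ → ℝ}

theorem summable_coeff_mul_pow (hc : ∀ k, |c k| ≤ 1 / k !) (w : ℝ) :
    Summable fun k => c k * w ^ k := by
  refine (Real.summable_pow_div_factorial |w|).of_norm_bounded fun k => ?_
  calc ‖c k * w ^ k‖ = |c k| * |w| ^ k := by simp
    _ ≤ 1 / k ! * |w| ^ k := by gcongr; exact hc k
    _ = |w| ^ k / k ! := by ring

theorem hasDerivAt_tsum_coeff_mul_pow (hc : ∀ k, |c k| ≤ 1 / k !) (w : ℝ) :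
    HasDerivAt (fun w => ∑' k, c k * w ^ k) (∑' k, (k + 1) * c (k + 1) * w ^ k) w := by
  set R := |w| + 1
  have hR : 1 ≤ R := by simp [R]
  have hbound : ∀ k, ∀ v ∈ Metric.ball (0 : ℝ) R,
      ‖c k * (k * v ^ (k - 1))‖ ≤ (2 * R) ^ k / k ! := by
    intro k v hv
    rw [mem_ball_zero_iff, Real.norm_eq_abs] at hv
    have hk : (k : ℝ) ≤ 2 ^ k := by exact_mod_cast (Nat.lt_two_pow_self).le
    have hv' : |v| ^ (k - 1) ≤ R ^ k :=
      (pow_le_pow_left₀ (abs_nonneg v) hv.le _).trans (pow_le_pow_right₀ hR (Nat.sub_le k 1))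
    calc ‖c k * (k * v ^ (k - 1))‖ = |c k| * (k * |v| ^ (k - 1)) := by simp
      _ ≤ 1 / k ! * (2 ^ k * R ^ k) := by gcongr; exact hc k
      _ = (2 * R) ^ k / k ! := by rw [mul_pow]; ring
  have hsum := Real.summable_pow_div_factorial (2 * R)
  have key := hasDerivAt_tsum_of_isPreconnected hsum Metric.isOpen_ball
    (convex_ball 0 R).isPreconnected (fun k v _ => (hasDerivAt_pow k v).const_mul (c k)) hbound
    (Metric.mem_ball_self (by positivity)) (summable_coeff_mul_pow hc 0)
    (by simp [R] : w ∈ Metric.ball (0 : ℝ) R)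
  rw [(hsum.of_norm_bounded fun k => hbound k w (by simp [R])).tsum_eq_zero_add] at key
  simp only [CharP.cast_eq_zero, zero_mul, mul_zero, zero_add, Nat.cast_add, Nat.cast_one,
    add_tsub_cancel_right] at key
  exact key.congr_deriv (tsum_congr fun k => by ring)

end PowerSeries

/- In the variable `w = z² / 4`, the functions `I₀ z`, `2 I₁(z) / z` and `z I₁(z) / 2` are power
series whose coefficients are bounded by `1 / k!`. -/

theorem besselI0_eq_tsum (z : ℝ) : besselI0 z = ∑' k, 1 / (k ! : ℝ) ^ 2 * (z ^ 2 / 4) ^ k :=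
  tsum_congr fun k => by rw [pow_mul]; ring

theorem besselI1_eq_tsum (z : ℝ) :
    besselI1 z = z / 2 * ∑' k, 1 / (k ! * (k + 1)! : ℝ) * (z ^ 2 / 4) ^ k := by
  rw [← tsum_mul_left]
  exact tsum_congr fun k => by rw [pow_succ, pow_mul]; ring

theorem abs_one_div_factorial_sq_le (k : ℕ) : |1 / (k ! : ℝ) ^ 2| ≤ 1 / (k ! : ℝ) := by
  have h : (1 : ℝ) ≤ k ! := by exact_mod_cast k.factorial_pos
  rw [abs_of_nonneg (by positivity), sq]
  exact one_div_le_one_div_of_le (by positivity) (le_mul_of_one_le_left (by positivity) h)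

theorem abs_one_div_factorial_mul_factorial_succ_le (k : ℕ) :
    |1 / (k ! * (k + 1)! : ℝ)| ≤ 1 / (k ! : ℝ) := by
  have h : (1 : ℝ) ≤ (k + 1)! := by exact_mod_cast (k + 1).factorial_pos
  rw [abs_of_nonneg (by positivity)]
  exact one_div_le_one_div_of_le (by positivity) (le_mul_of_one_le_right (by positivity) h)

theorem abs_self_div_factorial_sq_le (k : ℕ) : |(k / (k ! : ℝ) ^ 2)| ≤ 1 / (k ! : ℝ) := by
  have h : (k : ℝ) ≤ k ! := by exact_mod_cast k.self_le_factorial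
  have hk : (0 : ℝ) < k ! := by positivity
  rw [abs_of_nonneg (by positivity), div_le_div_iff₀ (by positivity) hk]
  nlinarith

theorem mul_besselI1_eq_tsum (z : ℝ) :
    z * besselI1 z = 2 * ∑' k, k / (k ! : ℝ) ^ 2 * (z ^ 2 / 4) ^ k := by
  rw [besselI1_eq_tsum, (summable_coeff_mul_pow abs_self_div_factorial_sq_le _).tsum_eq_zero_add]
  simp only [CharP.cast_eq_zero, zero_div, zero_mul, zero_add]
  rw [← mul_assoc, ← tsum_mul_left, ← tsum_mul_left]
  refine tsum_congr fun k => ?_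
  rw [Nat.factorial_succ]
  push_cast
  field_simp
  ring

theorem hasDerivAt_besselI0 (z : ℝ) : HasDerivAt besselI0 (besselI1 z) z := by
  have h := (hasDerivAt_tsum_coeff_mul_pow abs_one_div_factorial_sq_le (z ^ 2 / 4)).comp z
    ((hasDerivAt_pow 2 z).div_const 4)
  rw [funext besselI0_eq_tsum, besselI1_eq_tsum]
  refine h.congr_deriv ?_
  rw [← tsum_mul_right, ← tsum_mul_left]
  refine tsum_congr fun k => ?_
  rw [Nat.factorial_succ]
  push_cast
  field_simp
  ring

theorem hasDerivAt_mul_besselI1 (z : ℝ) :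
    HasDerivAt (fun z => z * besselI1 z) (z * besselI0 z) z := by
  have h := ((hasDerivAt_tsum_coeff_mul_pow abs_self_div_factorial_sq_le (z ^ 2 / 4)).comp z
    ((hasDerivAt_pow 2 z).div_const 4)).const_mul 2
  rw [funext mul_besselI1_eq_tsum, besselI0_eq_tsum]
  refine h.congr_deriv ?_
  rw [← tsum_mul_right, ← tsum_mul_left, ← tsum_mul_left]
  refine tsum_congr fun k => ?_
  rw [Nat.factorial_succ]
  push_cast
  field_simp
  ring

theorem besselI1_zero : besselI1 0 = 0 := by
  simp [besselI1_eq_tsum]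

theorem hasDerivAt_mul_besselI1_const_mul (a s : ℝ) :
    HasDerivAt (fun s => s * besselI1 (a * s)) (a * s * besselI0 (a * s)) s := by
  rcases eq_or_ne a 0 with rfl | ha
  · simpa [besselI1_zero] using hasDerivAt_const s (0 : ℝ)
  have h := ((hasDerivAt_mul_besselI1 (a * s)).comp s ((hasDerivAt_id s).const_mul a)).div_const a
  refine (h.congr_deriv (by field_simp)).congr_of_eventuallyEq
    (Eventually.of_forall fun s => ?_)
  simp only [Function.comp_apply]
  field_simp

theorem besselI0_pos (z : ℝ) : 0 < besselI0 z := by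
  rw [besselI0_eq_tsum]
  refine lt_of_lt_of_le (by simp)
    ((summable_coeff_mul_pow abs_one_div_factorial_sq_le _).le_tsum 0 fun k _ => by positivity)

@[fun_prop]
theorem continuous_besselI0 : Continuous besselI0 :=
  continuous_iff_continuousAt.2 fun z => (hasDerivAt_besselI0 z).continuousAt

@[fun_prop]
theorem continuous_besselI1 : Continuous besselI1 := by
  have h : Continuous fun w => ∑' k, 1 / (k ! * (k + 1)! : ℝ) * w ^ k :=
    continuous_iff_continuousAt.2 fun w =>
      (hasDerivAt_tsum_coeff_mul_pow abs_one_div_factorial_mul_factorial_succ_le w).continuousAt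
  rw [funext besselI1_eq_tsum]
  exact (continuous_id.div_const 2).mul (h.comp ((continuous_pow 2).div_const 4))

theorem norm_tsum_le_exp_add_self {f : ℕ → ℝ} (x : ℝ)
    (hf : ∀ k, ‖f k‖ ≤ exp x * (x ^ k / k !)) : ‖∑' k, f k‖ ≤ exp (x + x) := by
  refine tsum_of_norm_bounded ?_ hf
  rw [Real.exp_add, Real.exp_eq_exp_ℝ]
  exact (NormedSpace.expSeries_div_hasSum_exp x).mul_left _

-- With `x = |z| / 2`, the `k`-th term is `(x ^ k / k!) ^ 2 ≤ exp x * (x ^ k / k!)`.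
theorem abs_besselI0_le (z : ℝ) : |besselI0 z| ≤ exp |z| := by
  have hx : 0 ≤ |z| / 2 := by positivity
  rw [← Real.norm_eq_abs, besselI0, ← add_halves |z|]
  refine norm_tsum_le_exp_add_self _ fun k => ?_
  calc ‖(z / 2) ^ (2 * k) / (k ! : ℝ) ^ 2‖ = (|z| / 2) ^ k / k ! * ((|z| / 2) ^ k / k !) := by
        simp only [norm_div, norm_pow, Real.norm_eq_abs, abs_two, Nat.abs_cast]
        ring
    _ ≤ exp (|z| / 2) * ((|z| / 2) ^ k / k !) := by
        gcongr; exact Real.pow_div_factorial_le_exp _ hx k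

theorem abs_besselI1_le (z : ℝ) : |besselI1 z| ≤ exp |z| := by
  have hx : 0 ≤ |z| / 2 := by positivity
  rw [← Real.norm_eq_abs, besselI1, ← add_halves |z|]
  refine norm_tsum_le_exp_add_self _ fun k => ?_
  calc ‖(z / 2) ^ (2 * k + 1) / (k ! * (k + 1)! : ℝ)‖
        = (|z| / 2) ^ (k + 1) / (k + 1)! * ((|z| / 2) ^ k / k !) := by
        simp only [norm_div, norm_mul, norm_pow, Real.norm_eq_abs, abs_two, Nat.abs_cast]
        ring
    _ ≤ exp (|z| / 2) * ((|z| / 2) ^ k / k !) := by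
        gcongr; exact Real.pow_div_factorial_le_exp _ hx _

theorem pow_abs_mul_exp_le (n : ℕ) (c t : ℝ) :
    |t| ^ n * exp (c * |t| - t ^ 2 / 2) ≤ exp ((n + c) ^ 2) * exp (-(1 / 4) * t ^ 2) := by
  have hpow : |t| ^ n ≤ exp (n * |t|) := by
    rw [Real.exp_nat_mul]
    exact pow_le_pow_left₀ (abs_nonneg t) ((le_add_of_nonneg_right zero_le_one).trans
      (Real.add_one_le_exp _)) n
  calc |t| ^ n * exp (c * |t| - t ^ 2 / 2) ≤ exp (n * |t|) * exp (c * |t| - t ^ 2 / 2) := by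
        gcongr
    _ ≤ exp ((n + c) ^ 2) * exp (-(1 / 4) * t ^ 2) := by
        rw [← Real.exp_add, ← Real.exp_add, Real.exp_le_exp]
        nlinarith [sq_nonneg (|t| - 2 * (n + c)), sq_abs t]

theorem integrable_pow_abs_mul_exp (n : ℕ) (c : ℝ) :
    Integrable fun t : ℝ => |t| ^ n * exp (c * |t| - t ^ 2 / 2) :=
  ((integrable_exp_neg_mul_sq (by norm_num : (0 : ℝ) < 1 / 4)).const_mul _).mono'
    (by fun_prop) (Eventually.of_forall fun t => by
      rw [Real.norm_of_nonneg (by positivity)]; exact pow_abs_mul_exp_le n c t)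

theorem tendsto_pow_abs_mul_exp_atTop (n : ℕ) (c : ℝ) :
    Tendsto (fun t : ℝ => |t| ^ n * exp (c * |t| - t ^ 2 / 2)) atTop (𝓝 0) := by
  have h : Tendsto (fun t : ℝ => exp ((n + c) ^ 2) * exp (-(1 / 4) * t ^ 2)) atTop (𝓝 0) := by
    simpa using (Real.tendsto_exp_atBot.comp
      ((tendsto_pow_atTop two_ne_zero).const_mul_atTop_of_neg
        (by norm_num : -(1 / 4 : ℝ) < 0))).const_mul (exp ((n + c) ^ 2))
  exact squeeze_zero (fun t => by positivity) (pow_abs_mul_exp_le n c) h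

-- `marcumQ a b` is definitionally `∫ t in Set.Ioi b, riceDensity a t`.
noncomputable def riceDensity (a t : ℝ) : ℝ := t * exp (-(t ^ 2 + a ^ 2) / 2) * besselI0 (a * t)

noncomputable def riceDensityDeriv (a t : ℝ) : ℝ :=
  t * exp (-(t ^ 2 + a ^ 2) / 2) * (t * besselI1 (a * t) - a * besselI0 (a * t))

theorem continuous_riceDensity : Continuous (Function.uncurry riceDensity) := by
  unfold riceDensity; fun_prop

theorem continuous_riceDensityDeriv : Continuous (Function.uncurry riceDensityDeriv) := by
  unfold riceDensityDeriv; fun_prop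

theorem hasDerivAt_riceDensity_fst (a t : ℝ) :
    HasDerivAt (riceDensity · t) (riceDensityDeriv a t) a := by
  have hexp : HasDerivAt (fun x => exp (-(t ^ 2 + x ^ 2) / 2))
      (exp (-(t ^ 2 + a ^ 2) / 2) * (-(2 * a) / 2)) a := by
    simpa using (((hasDerivAt_pow 2 a).const_add (t ^ 2)).neg.div_const 2).exp
  have hbessel : HasDerivAt (fun x => besselI0 (x * t)) (besselI1 (a * t) * t) a := by
    simpa [Function.comp_def] using
      (hasDerivAt_besselI0 (a * t)).comp a ((hasDerivAt_id a).mul_const t)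
  refine ((hexp.const_mul t).mul hbessel).congr_deriv ?_
  unfold riceDensityDeriv; ring

-- The key identity: the `a`-derivative of the Rice density is a `t`-derivative.
theorem hasDerivAt_neg_exp_mul_mul_besselI1 (a t : ℝ) :
    HasDerivAt (fun t => -(exp (-(t ^ 2 + a ^ 2) / 2) * (t * besselI1 (a * t))))
      (riceDensityDeriv a t) t := by
  have hexp : HasDerivAt (fun t => exp (-(t ^ 2 + a ^ 2) / 2))
      (exp (-(t ^ 2 + a ^ 2) / 2) * (-(2 * t) / 2)) t := by
    simpa using (((hasDerivAt_pow 2 t).add_const (a ^ 2)).neg.div_const 2).exp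
  refine (hexp.mul (hasDerivAt_mul_besselI1_const_mul a t)).neg.congr_deriv ?_
  unfold riceDensityDeriv; ring

theorem exp_mul_abs_le_of_abs_le_exp {x c t B : ℝ} (hx : |x| ≤ c) (hB : |B| ≤ exp |x * t|) :
    exp (-(t ^ 2 + x ^ 2) / 2) * |B| ≤ exp (c * |t| - t ^ 2 / 2) := by
  have hxt : |x * t| ≤ c * |t| := by rw [abs_mul]; gcongr
  calc exp (-(t ^ 2 + x ^ 2) / 2) * |B| ≤ exp (-(t ^ 2) / 2) * exp (c * |t|) := by
        gcongr
        · nlinarith [sq_nonneg x]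
        · exact hB.trans (exp_le_exp.2 hxt)
    _ = exp (c * |t| - t ^ 2 / 2) := by rw [← Real.exp_add]; ring_nf

theorem abs_riceDensity_le {x c : ℝ} (hx : |x| ≤ c) (t : ℝ) :
    |riceDensity x t| ≤ |t| * exp (c * |t| - t ^ 2 / 2) := by
  have h := exp_mul_abs_le_of_abs_le_exp hx (abs_besselI0_le (x * t))
  calc |riceDensity x t| = |t| * (exp (-(t ^ 2 + x ^ 2) / 2) * |besselI0 (x * t)|) := by
        rw [riceDensity, abs_mul, abs_mul, abs_of_pos (exp_pos _), mul_assoc]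
    _ ≤ |t| * exp (c * |t| - t ^ 2 / 2) := by gcongr

theorem abs_riceDensityDeriv_le {x c : ℝ} (hx : |x| ≤ c) (t : ℝ) :
    |riceDensityDeriv x t| ≤
      |t| ^ 2 * exp (c * |t| - t ^ 2 / 2) + c * (|t| * exp (c * |t| - t ^ 2 / 2)) := by
  have h₀ := exp_mul_abs_le_of_abs_le_exp hx (abs_besselI0_le (x * t))
  have h₁ := exp_mul_abs_le_of_abs_le_exp hx (abs_besselI1_le (x * t))
  have hc : 0 ≤ c := (abs_nonneg x).trans hx
  calc |riceDensityDeriv x t|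
      ≤ |t| * exp (-(t ^ 2 + x ^ 2) / 2) *
          (|t| * |besselI1 (x * t)| + |x| * |besselI0 (x * t)|) := by
        rw [riceDensityDeriv, abs_mul, abs_mul, abs_of_pos (exp_pos _), ← abs_mul t,
          ← abs_mul x]
        gcongr
        exact abs_sub _ _
    _ = |t| * (|t| * (exp (-(t ^ 2 + x ^ 2) / 2) * |besselI1 (x * t)|)
          + |x| * (exp (-(t ^ 2 + x ^ 2) / 2) * |besselI0 (x * t)|)) := by ring
    _ ≤ |t| * (|t| * exp (c * |t| - t ^ 2 / 2) + c * exp (c * |t| - t ^ 2 / 2)) := by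
        gcongr
    _ = _ := by ring

theorem integrable_riceDensity (a : ℝ) : Integrable (riceDensity a) :=
  (by simpa using integrable_pow_abs_mul_exp 1 |a| : Integrable _).mono'
    (continuous_riceDensity.uncurry_left a).aestronglyMeasurable
    (Eventually.of_forall (abs_riceDensity_le le_rfl))

theorem integrable_riceDensityDeriv_bound (c : ℝ) :
    Integrable fun t : ℝ =>
      |t| ^ 2 * exp (c * |t| - t ^ 2 / 2) + c * (|t| * exp (c * |t| - t ^ 2 / 2)) :=
  (integrable_pow_abs_mul_exp 2 c).add
    ((by simpa using integrable_pow_abs_mul_exp 1 c :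
      Integrable fun t : ℝ => |t| * exp (c * |t| - t ^ 2 / 2)).const_mul c)

theorem integrable_riceDensityDeriv (a : ℝ) : Integrable (riceDensityDeriv a) :=
  (integrable_riceDensityDeriv_bound |a|).mono'
    (continuous_riceDensityDeriv.uncurry_left a).aestronglyMeasurable
    (Eventually.of_forall (abs_riceDensityDeriv_le le_rfl))

theorem integral_Ioi_riceDensityDeriv (a b : ℝ) :
    ∫ t in Set.Ioi b, riceDensityDeriv a t =
      b * exp (-(b ^ 2 + a ^ 2) / 2) * besselI1 (a * b) := by
  have hlim : Tendsto (fun t => -(exp (-(t ^ 2 + a ^ 2) / 2) * (t * besselI1 (a * t))))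
      atTop (𝓝 0) := by
    refine squeeze_zero_norm (fun t => ?_) (by simpa using tendsto_pow_abs_mul_exp_atTop 1 |a|)
    rw [norm_neg, Real.norm_eq_abs, abs_mul, abs_of_pos (exp_pos _), abs_mul, mul_left_comm]
    exact mul_le_mul_of_nonneg_left
      (exp_mul_abs_le_of_abs_le_exp le_rfl (abs_besselI1_le (a * t))) (abs_nonneg t)
  rw [integral_Ioi_of_hasDerivAt_of_tendsto' (fun t _ => hasDerivAt_neg_exp_mul_mul_besselI1 a t)
    (integrable_riceDensityDeriv a).integrableOn hlim]
  ring

theorem hasDerivAt_marcumQ_fst (a b : ℝ) :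
    HasDerivAt (marcumQ · b) (b * exp (-(b ^ 2 + a ^ 2) / 2) * besselI1 (a * b)) a := by
  have hball : ∀ x ∈ Metric.ball a 1, |x| ≤ |a| + 1 := fun x hx => by
    rw [Metric.mem_ball, Real.dist_eq] at hx
    linarith [abs_sub_abs_le_abs_sub x a]
  have h := (hasDerivAt_integral_of_dominated_loc_of_deriv_le
    (μ := volume.restrict (Set.Ioi b)) (F := riceDensity) (F' := riceDensityDeriv)
    (Metric.ball_mem_nhds a one_pos)
    (Eventually.of_forall fun x => (integrable_riceDensity x).aestronglyMeasurable.restrict)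
    (integrable_riceDensity a).integrableOn
    (integrable_riceDensityDeriv a).aestronglyMeasurable.restrict
    (Eventually.of_forall fun t x hx => abs_riceDensityDeriv_le (hball x hx) t)
    (integrable_riceDensityDeriv_bound _).integrableOn
    (Eventually.of_forall fun t x _ => hasDerivAt_riceDensity_fst x t)).2
  rwa [integral_Ioi_riceDensityDeriv] at h

theorem hasDerivAt_marcumQ_snd (a b : ℝ) : HasDerivAt (marcumQ a) (-riceDensity a b) b :=
  hasDerivAt_integral_Ioi (integrable_riceDensity a)
    (continuous_riceDensity.uncurry_left a).continuousAt

theorem level_curve_derivative_general (ε a b : ℝ)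
    (hb : 0 < b) (y : ℝ → ℝ) (y' : ℝ)
    (hderiv : HasDerivAt y y' a) (hya : y a = b)
    (hlevel : ∀ᶠ x in nhds a, marcumQ x (y x) = 1 - ε) :
    y' = besselI1 (a * b) / besselI0 (a * b) := by
  have hQ : HasDerivAt (fun x => marcumQ x (y x))
      (y a * exp (-(y a ^ 2 + a ^ 2) / 2) * besselI1 (a * y a) + -riceDensity a (y a) * y') a :=
    hasDerivAt_comp_of_hasDerivAt_partial
      (F₁ := fun x v => v * exp (-(v ^ 2 + x ^ 2) / 2) * besselI1 (x * v))
      (F₂ := fun x v => -riceDensity x v)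
      (Eventually.of_forall fun v => hasDerivAt_marcumQ_fst v.1 v.2)
      (Eventually.of_forall fun v => hasDerivAt_marcumQ_snd v.1 v.2)
      (by fun_prop) (continuous_neg.comp continuous_riceDensity).continuousAt hderiv
  have hconst : HasDerivAt (fun x => marcumQ x (y x)) 0 a :=
    (hasDerivAt_const a (1 - ε)).congr_of_eventuallyEq hlevel
  have hzero := hQ.unique hconst
  rw [hya, riceDensity] at hzero
  have hbexp : b * exp (-(b ^ 2 + a ^ 2) / 2) ≠ 0 := by positivity
  rw [eq_div_iff (besselI0_pos _).ne']
  apply mul_left_cancel₀ hbexp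
  linear_combination -hzero

theorem level_curve_derivative (ε a b : ℝ) (hε : ε ∈ Set.Ioo (0:ℝ) 1) (ha : 0 < a)
    (hb : 0 < b) (hab : marcumQ a b = 1 - ε) (y : ℝ → ℝ) (y' : ℝ)
    (hderiv : HasDerivAt y y' a) (hya : y a = b)
    (hpos : ∀ᶠ x in nhds a, 0 < y x)
    (hlevel : ∀ᶠ x in nhds a, marcumQ x (y x) = 1 - ε) :
    y' = besselI1 (a * b) / besselI0 (a * b) :=
  level_curve_derivative_general ε a b hb y y' hderiv hya hlevel
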